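/- Let p be an odd rational prime with p ≡ 2 (mod 3), so that p is a prime element of ℤ[ω], and let β ∈ ℤ[ω] with p ∤ β. Then β^{(p²−1)/2} ≡ (N(β)/p) (mod pℤ[ω]), where N(β) ∈ ℤ is the norm of β and (N(β)/p) ∈ {1, −1} is the Legendre symbol of N(β) modulo p. In other words, the quadratic residue symbol satisfies [β/p] = (N(β)/p). -/

import Mathlib

/-! Since `p ≡ 2 (mod 3)`, the Frobenius `x ↦ x ^ p` of `ℤ[ω]/(p)` sends `ω` to
`ω ^ 2 = conj ω`, so it is complex conjugation. Hence `β ^ (p + 1) ≡ β · conj β = N(β) (mod p)`,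
and raising this to the power `(p - 1)/2` gives
`β ^ ((p ^ 2 - 1)/2) ≡ N(β) ^ ((p - 1)/2) ≡ (N(β)/p)` by Euler's criterion. -/

noncomputable section

def ω : ℂ := (-1 + Complex.I * Real.sqrt 3) / 2

def Zω : Subalgebra ℤ ℂ := Algebra.adjoin ℤ {ω}

def ωZ : Zω := ⟨ω, Algebra.subset_adjoin (Set.mem_singleton ω)⟩

/-- `√−3 = 1 + 2ω` as an element of `ℤ[ω]`. -/
def sqrtm3 : Zω := 1 + 2 * ωZ

lemma Nat.sq_sub_one_div_two_of_odd {n : ℕ} (hn : n % 2 = 1) :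
    (n ^ 2 - 1) / 2 = (n + 1) * (n / 2) := by
  obtain ⟨k, rfl⟩ : ∃ k, n = 2 * k + 1 := ⟨n / 2, by omega⟩
  have hk : (2 * k + 1) / 2 = k := by omega
  have hsq : (2 * k + 1) ^ 2 - 1 = 2 * ((2 * k + 1 + 1) * k) := Nat.sub_eq_of_eq_add (by ring)
  rw [hk, hsq, Nat.mul_div_cancel_left _ two_pos]

lemma pow_eq_sq_of_mod_three {M : Type*} [Monoid M] {x : M} (hx : x ^ 3 = 1) {n : ℕ}
    (hn : n % 3 = 2) :
    x ^ n = x ^ 2 := by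
  rw [← Nat.div_add_mod n 3, hn, pow_add, pow_mul, hx, one_pow, one_mul]

lemma Int.prime_dvd_pow_sub_self (p : ℕ) [Fact p.Prime] (m : ℤ) : (p : ℤ) ∣ m ^ p - m := by
  rw [← ZMod.intCast_zmod_eq_zero_iff_dvd]
  push_cast
  rw [ZMod.pow_card, sub_self]

lemma Int.prime_dvd_pow_div_two_sub_legendreSym (p : ℕ) [Fact p.Prime] (a : ℤ) :
    (p : ℤ) ∣ a ^ (p / 2) - legendreSym p a := by
  rw [← ZMod.intCast_zmod_eq_zero_iff_dvd]
  push_cast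
  rw [legendreSym.eq_pow, sub_self]

section CommRing

variable {R : Type*} [CommRing R] (p : ℕ) [Fact p.Prime]

lemma prime_dvd_intCast_pow_sub_self (m : ℤ) : (p : R) ∣ (m : R) ^ p - m := by
  exact_mod_cast Int.cast_dvd_cast _ _ (Int.prime_dvd_pow_sub_self p m)

lemma prime_dvd_intCast_pow_div_two_sub_legendreSym (a : ℤ) :
    (p : R) ∣ (a : R) ^ (p / 2) - (legendreSym p a : ℤ) := by
  exact_mod_cast Int.cast_dvd_cast _ _ (Int.prime_dvd_pow_div_two_sub_legendreSym p a)

lemma prime_dvd_intCast_add_mul_pow_sub (a b : ℤ) (x : R) :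
    (p : R) ∣ ((a : R) + b * x) ^ p - (a + b * x ^ p) := by
  obtain ⟨r, hr⟩ := exists_add_pow_prime_eq (Fact.out : p.Prime) (a : R) (b * x)
  obtain ⟨u, hu⟩ := prime_dvd_intCast_pow_sub_self (R := R) p a
  obtain ⟨v, hv⟩ := prime_dvd_intCast_pow_sub_self (R := R) p b
  refine ⟨u + v * x ^ p + a * b * x * r, ?_⟩
  rw [hr, mul_pow]
  linear_combination hu + x ^ p * hv

end CommRing

lemma ω_sq : ω ^ 2 = -1 - ω := by
  have h3 : (Real.sqrt 3 : ℂ) ^ 2 = 3 := by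
    exact_mod_cast Real.sq_sqrt (by norm_num : (0 : ℝ) ≤ 3)
  unfold ω
  linear_combination ((Real.sqrt 3 : ℂ) ^ 2 / 4) * Complex.I_sq - (1 / 4) * h3

lemma ω_pow_three : ω ^ 3 = 1 := by
  linear_combination (ω - 1) * ω_sq

lemma conj_ω : (starRingEnd ℂ) ω = ω ^ 2 := by
  rw [ω_sq]
  unfold ω
  simp only [map_div₀, map_add, map_mul, map_neg, map_one, map_ofNat, Complex.conj_I,
    Complex.conj_ofReal]
  ring

lemma coe_ωZ : ((ωZ : Zω) : ℂ) = ω := rfl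

lemma ωZ_pow_three : ωZ ^ 3 = 1 := Subtype.ext (by push_cast [coe_ωZ]; exact ω_pow_three)

lemma Zω.exists_eq_intCast_add_mul_ωZ (z : Zω) : ∃ a b : ℤ, z = a + b * ωZ := by
  suffices ∀ x ∈ Zω, ∃ a b : ℤ, x = a + b * ω by
    obtain ⟨a, b, h⟩ := this z z.2
    exact ⟨a, b, Subtype.ext (by push_cast [coe_ωZ]; exact h)⟩
  intro x hx
  induction hx using Algebra.adjoin_induction with
  | mem x hx => exact ⟨0, 1, by rw [Set.mem_singleton_iff.1 hx]; simp⟩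
  | algebraMap r => exact ⟨r, 0, by simp⟩
  | add x y _ _ ihx ihy =>
      obtain ⟨a, b, rfl⟩ := ihx
      obtain ⟨c, d, rfl⟩ := ihy
      exact ⟨a + c, b + d, by push_cast; ring⟩
  | mul x y _ _ ihx ihy =>
      obtain ⟨a, b, rfl⟩ := ihx
      obtain ⟨c, d, rfl⟩ := ihy
      refine ⟨a * c - b * d, a * d + b * c - b * d, ?_⟩
      push_cast
      linear_combination (b : ℂ) * d * ω_sq

lemma coe_conj_intCast_add_mul_ωZ (a b : ℤ) :
    (((a + b * ωZ ^ 2 : Zω)) : ℂ) = (starRingEnd ℂ) ((a + b * ωZ : Zω) : ℂ) := by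
  push_cast [coe_ωZ]
  rw [map_add, map_mul, map_intCast, map_intCast, conj_ω]

theorem stmt13_general (p : ℕ) [Fact (Nat.Prime p)] (hodd : p ≠ 2) (hp3 : p % 3 = 2)
    (β : Zω)
    (Nβ : ℤ) (hNβ : ((Nβ : ℂ)) = (β : ℂ) * (starRingEnd ℂ) (β : ℂ)) :
    (p : Zω) ∣ β ^ ((p ^ 2 - 1) / 2) - ((legendreSym p Nβ : ℤ) : Zω) := by
  obtain ⟨a, b, rfl⟩ := Zω.exists_eq_intCast_add_mul_ωZ β
  have hfrob : (p : Zω) ∣ (a + b * ωZ) ^ p - (a + b * ωZ ^ 2) := by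
    simpa only [pow_eq_sq_of_mod_three ωZ_pow_three hp3] using
      prime_dvd_intCast_add_mul_pow_sub p a b ωZ
  have hnorm : (a + b * ωZ) * (a + b * ωZ ^ 2) = (Nβ : Zω) :=
    Subtype.ext <| by
      rw [SubringClass.coe_intCast, hNβ, ← coe_conj_intCast_add_mul_ωZ, Subalgebra.coe_mul]
  have hpow : (p : Zω) ∣ (a + b * ωZ) ^ (p + 1) - Nβ := by
    obtain ⟨u, hu⟩ := hfrob
    exact ⟨(a + b * ωZ) * u, by linear_combination (a + b * ωZ) * hu + hnorm⟩
  have hodd' : p % 2 = 1 := Nat.odd_iff.1 ((Fact.out : p.Prime).odd_of_ne_two hodd)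
  rw [Nat.sq_sub_one_div_two_of_odd hodd', pow_mul]
  simpa only [sub_add_sub_cancel] using
    dvd_add (hpow.trans (sub_dvd_pow_sub_pow _ _ (p / 2)))
      (prime_dvd_intCast_pow_div_two_sub_legendreSym p Nβ)

/-- Let `p` be an odd rational prime with `p ≡ 2 (mod 3)` (so `p` is a prime element of
`ℤ[ω]`), and let `β ∈ ℤ[ω]` with `p ∤ β`.  Then
`β^{(p²−1)/2} ≡ (N(β)/p) (mod pℤ[ω])`, where `N(β) = β·conj β ∈ ℤ` and `(N(β)/p)` is
the Legendre symbol; i.e. the quadratic residue symbol satisfies `[β/p] = (N(β)/p)`. -/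
theorem stmt13 (p : ℕ) [Fact (Nat.Prime p)] (hodd : p ≠ 2) (hp3 : p % 3 = 2)
    (β : Zω) (hβ : ¬ ((p : Zω) ∣ β))
    (Nβ : ℤ) (hNβ : ((Nβ : ℂ)) = (β : ℂ) * (starRingEnd ℂ) (β : ℂ)) :
    (p : Zω) ∣ β ^ ((p ^ 2 - 1) / 2) - ((legendreSym p Nβ : ℤ) : Zω) :=
  stmt13_general p hodd hp3 β Nβ hNβ
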